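/- (Indirect sum, Boolean case) Let f_0, f_1 : 𝔽_2^r → 𝔽_2 be s-plateaued functions and g_0, g_1 : 𝔽_2^m → 𝔽_2 be bent functions (m even). Then h(x,y) = g_0(y) + f_0(x) + (f_0(x)+f_1(x))(g_0(y)+g_1(y)) is an s-plateaued function on 𝔽_2^{r+m}, i.e. |W_h(a,b)| ∈ {0, 2^{(r+m+s)/2}} for all (a,b). -/

import Mathlib

/-- Inner product on `(ZMod 2)^n`. -/
def dot2 {n : ℕ} (a x : Fin n → ZMod 2) : ZMod 2 := ∑ i, a i * x i

/-- Walsh transform of a Boolean function. -/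
noncomputable def walshB (n : ℕ) (f : (Fin n → ZMod 2) → ZMod 2) (a : Fin n → ZMod 2) : ℂ :=
  ∑ x : Fin n → ZMod 2, (-1 : ℂ) ^ ((f x + dot2 a x).val)

/-- Walsh transform of a Boolean function on `(ZMod 2)^r × (ZMod 2)^m`. -/
noncomputable def walshB2 (r m : ℕ) (h : (Fin r → ZMod 2) × (Fin m → ZMod 2) → ZMod 2)
    (a : (Fin r → ZMod 2) × (Fin m → ZMod 2)) : ℂ :=
  ∑ x : (Fin r → ZMod 2) × (Fin m → ZMod 2),
    (-1 : ℂ) ^ ((h x + dot2 a.1 x.1 + dot2 a.2 x.2).val)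

lemma zmod2_cases : ∀ u : ZMod 2, u = 0 ∨ u = 1 := by decide

lemma chi_add (u v : ZMod 2) :
    ((-1:ℂ)) ^ ((u+v).val) = (-1) ^ u.val * (-1) ^ v.val := by
  rcases zmod2_cases u with h | h <;> rcases zmod2_cases v with h' | h' <;>
    subst h <;> subst h' <;>
    norm_num [show ZMod.val (2:ZMod 2) = 0 from by decide,
      show ZMod.val (1:ZMod 2) = 1 from by decide,
      show ZMod.val (0:ZMod 2) = 0 from by decide]

lemma key_pt (e0 e1 d0 d1 A B : ZMod 2) :
    2 * ((-1:ℂ)) ^ ((d0 + e0 + (e0+e1)*(d0+d1) + A + B).val) =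
      (-1)^(e0+A).val * ((-1)^(d0+B).val + (-1)^(d1+B).val) +
      (-1)^(e1+A).val * ((-1)^(d0+B).val - (-1)^(d1+B).val) := by
  simp only [chi_add]
  rcases zmod2_cases e0 with h | h <;> rcases zmod2_cases e1 with h' | h' <;>
    rcases zmod2_cases d0 with h2 | h2 <;> rcases zmod2_cases d1 with h3 | h3 <;>
    subst h <;> subst h' <;> subst h2 <;> subst h3 <;>
    norm_num [show ZMod.val (4:ZMod 2) = 0 from by decide,
      show ZMod.val (3:ZMod 2) = 1 from by decide,
      show ZMod.val (2:ZMod 2) = 0 from by decide,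
      show ZMod.val (1:ZMod 2) = 1 from by decide,
      show ZMod.val (0:ZMod 2) = 0 from by decide] <;> ring

lemma walsh_real (n : ℕ) (f : (Fin n → ZMod 2) → ZMod 2) (a : Fin n → ZMod 2) :
    ∃ t : ℝ, walshB n f a = (t : ℂ) := by
  refine ⟨∑ x : Fin n → ZMod 2, (-1 : ℝ) ^ ((f x + dot2 a x).val), ?_⟩
  rw [walshB]; push_cast; rfl

lemma factor (r m : ℕ) (f0 f1 : (Fin r → ZMod 2) → ZMod 2)
    (g0 g1 : (Fin m → ZMod 2) → ZMod 2)
    (h : (Fin r → ZMod 2) × (Fin m → ZMod 2) → ZMod 2)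
    (hdef : ∀ x y, h (x, y) = g0 y + f0 x + (f0 x + f1 x) * (g0 y + g1 y))
    (a : Fin r → ZMod 2) (b : Fin m → ZMod 2) :
    2 * walshB2 r m h (a, b) =
      walshB r f0 a * (walshB m g0 b + walshB m g1 b) +
      walshB r f1 a * (walshB m g0 b - walshB m g1 b) := by
  have h1 : 2 * walshB2 r m h (a, b) =
      ∑ x : Fin r → ZMod 2, ∑ y : Fin m → ZMod 2,
        ((-1:ℂ)^(f0 x + dot2 a x).val *
          ((-1)^(g0 y + dot2 b y).val + (-1)^(g1 y + dot2 b y).val) +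
        (-1)^(f1 x + dot2 a x).val *
          ((-1)^(g0 y + dot2 b y).val - (-1)^(g1 y + dot2 b y).val)) := by
    rw [walshB2, Fintype.sum_prod_type, Finset.mul_sum]
    refine Finset.sum_congr rfl fun x _ => ?_
    rw [Finset.mul_sum]
    refine Finset.sum_congr rfl fun y _ => ?_
    rw [hdef]
    exact key_pt (f0 x) (f1 x) (g0 y) (g1 y) (dot2 a x) (dot2 b y)
  rw [h1]
  have h2 : walshB m g0 b + walshB m g1 b =
      ∑ y : Fin m → ZMod 2, ((-1:ℂ)^(g0 y + dot2 b y).val + (-1)^(g1 y + dot2 b y).val) := by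
    rw [walshB, walshB, ← Finset.sum_add_distrib]
  have h3 : walshB m g0 b - walshB m g1 b =
      ∑ y : Fin m → ZMod 2, ((-1:ℂ)^(g0 y + dot2 b y).val - (-1)^(g1 y + dot2 b y).val) := by
    rw [walshB, walshB, ← Finset.sum_sub_distrib]
  rw [h2, h3]; unfold walshB
  rw [Finset.sum_mul_sum, Finset.sum_mul_sum, ← Finset.sum_add_distrib]
  exact Finset.sum_congr rfl fun x _ => Finset.sum_add_distrib

theorem stmt12 (r m s : ℕ) (hr : 1 ≤ r) (hm : 1 ≤ m) (hs : s ≤ r)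
    (hrs : Even (r + s)) (hme : Even m)
    (f0 f1 : (Fin r → ZMod 2) → ZMod 2)
    (hf0 : ∀ a, ‖walshB r f0 a‖ = (2 : ℝ) ^ (((r : ℝ) + (s : ℝ)) / 2) ∨
      walshB r f0 a = 0)
    (hf1 : ∀ a, ‖walshB r f1 a‖ = (2 : ℝ) ^ (((r : ℝ) + (s : ℝ)) / 2) ∨
      walshB r f1 a = 0)
    (g0 g1 : (Fin m → ZMod 2) → ZMod 2)
    (hg0 : ∀ b, ‖walshB m g0 b‖ = (2 : ℝ) ^ ((m : ℝ) / 2))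
    (hg1 : ∀ b, ‖walshB m g1 b‖ = (2 : ℝ) ^ ((m : ℝ) / 2))
    (h : (Fin r → ZMod 2) × (Fin m → ZMod 2) → ZMod 2)
    (hdef : ∀ x y, h (x, y) = g0 y + f0 x + (f0 x + f1 x) * (g0 y + g1 y)) :
    ∀ a : (Fin r → ZMod 2) × (Fin m → ZMod 2),
      ‖walshB2 r m h a‖ = (2 : ℝ) ^ (((r : ℝ) + (m : ℝ) + (s : ℝ)) / 2) ∨
        walshB2 r m h a = 0 := by
  rintro ⟨a, b⟩
  have hfac := factor r m f0 f1 g0 g1 h hdef a b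
  obtain ⟨t0, ht0⟩ := walsh_real m g0 b
  obtain ⟨t1, ht1⟩ := walsh_real m g1 b
  have habs0 : |t0| = (2:ℝ) ^ ((m:ℝ)/2) := by
    rw [← Real.norm_eq_abs, ← Complex.norm_real, ← ht0]; exact hg0 b
  have habs1 : |t1| = (2:ℝ) ^ ((m:ℝ)/2) := by
    rw [← Real.norm_eq_abs, ← Complex.norm_real, ← ht1]; exact hg1 b
  have hrpow : (2:ℝ) ^ (((r:ℝ) + s)/2) * (2:ℝ) ^ ((m:ℝ)/2) = (2:ℝ) ^ (((r:ℝ) + m + s)/2) := by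
    rw [← Real.rpow_add (by norm_num : (0:ℝ) < 2)]; congr 1; ring
  have key : ∀ W : ℂ, walshB2 r m h (a, b) = W * walshB m g0 b →
      (‖W‖ = (2:ℝ) ^ (((r:ℝ) + s)/2) ∨ W = 0) →
      ‖walshB2 r m h (a, b)‖ = (2:ℝ) ^ (((r:ℝ) + (m:ℝ) + (s:ℝ))/2) ∨
        walshB2 r m h (a, b) = 0 := by
    intro W hWh hWc
    rcases hWc with hWc | hWc
    · left
      rw [hWh, norm_mul, hWc, hg0 b, hrpow]
    · right
      rw [hWh, hWc, zero_mul]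
  rcases abs_eq_abs.mp (habs0.trans habs1.symm) with he | he
  · have hG : walshB m g1 b = walshB m g0 b := by rw [ht0, ht1, he]
    refine key (walshB r f0 a) ?_ (hf0 a)
    have : 2 * walshB2 r m h (a, b) = 2 * (walshB r f0 a * walshB m g0 b) := by
      rw [hfac, hG]; ring
    exact mul_left_cancel₀ two_ne_zero this
  · have hG : walshB m g1 b = -walshB m g0 b := by
      rw [ht0, ht1, he]; push_cast; ring
    refine key (walshB r f1 a) ?_ (hf1 a)
    have : 2 * walshB2 r m h (a, b) = 2 * (walshB r f1 a * walshB m g0 b) := by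
      rw [hfac, hG]; ring
    exact mul_left_cancel₀ two_ne_zero this
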